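/- Let A be an L-invariant subset of the Manhattan plane ℝ₁² and p ∈ ℝ₁². If every one of the four quadrants of p has nonempty intersection with A, then p belongs to A. -/

import Mathlib

open Set

/-- The taxicab (ℓ¹) distance on the plane, making `ℝ × ℝ` the Manhattan plane ℝ₁². -/
def taxiDist (p q : ℝ × ℝ) : ℝ := |p.1 - q.1| + |p.2 - q.2|

/-- Horizontal hatching `L_x(A)`. -/
def hatchX (A : Set (ℝ × ℝ)) : Set (ℝ × ℝ) :=
  {p | ∃ a ∈ A, ∃ b ∈ A, a.2 = p.2 ∧ b.2 = p.2 ∧ a.1 ≤ p.1 ∧ p.1 ≤ b.1}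

/-- Vertical hatching `L_y(A)`. -/
def hatchY (A : Set (ℝ × ℝ)) : Set (ℝ × ℝ) :=
  {p | ∃ a ∈ A, ∃ b ∈ A, a.1 = p.1 ∧ b.1 = p.1 ∧ a.2 ≤ p.2 ∧ p.2 ≤ b.2}

/-- Double hatching `L(A) = L_x(L_y(A))`. -/
def doubleHatch (A : Set (ℝ × ℝ)) : Set (ℝ × ℝ) := hatchX (hatchY A)

/-- The real sign `+1` or `-1` associated to a Boolean sign. -/
def sgn (ε : Bool) : ℝ := if ε then 1 else -1

/-- The `ε₁ε₂`-quadrant of the point `p`: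
`Q_p^{ε₁ε₂} = {q | ε₁(q₁ - p₁) ≥ 0 ∧ ε₂(q₂ - p₂) ≥ 0}`. -/
def quadrant (p : ℝ × ℝ) (ε₁ ε₂ : Bool) : Set (ℝ × ℝ) :=
  {q | 0 ≤ sgn ε₁ * (q.1 - p.1) ∧ 0 ≤ sgn ε₂ * (q.2 - p.2)}

/-! If `p ∉ A`, closure of `A` under vertical hatching means that the points of `A` on the
vertical line through `p` all lie strictly on one side of `p`, and likewise on the horizontal
line. So `A` misses both boundary rays of one closed quadrant `Q` of `p`. But `A` meets `Q` and
the opposite quadrant, which touches `Q` only at `p`; a connected set meeting `Q` and its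
complement must meet the frontier of `Q`. -/

theorem IsPreconnected.inter_frontier_nonempty {X : Type*} [TopologicalSpace X] {s t : Set X}
    (hs : IsPreconnected s) (hst : (s ∩ t).Nonempty) (hst' : (s \ t).Nonempty) :
    (s ∩ frontier t).Nonempty := by
  have := isPreconnected_iff_preconnectedSpace.mp hs
  obtain ⟨y, hys, hyt⟩ := hst
  obtain ⟨z, hzs, hzt⟩ := hst'
  obtain ⟨x, hx⟩ : (frontier (((↑) : s → X) ⁻¹' t)).Nonempty :=
    nonempty_frontier_iff.mpr
      ⟨⟨⟨y, hys⟩, hyt⟩, (ne_univ_iff_exists_notMem _).mpr ⟨⟨z, hzs⟩, hzt⟩⟩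
  exact ⟨x, x.2, continuous_subtype_val.frontier_preimage_subset t hx⟩

theorem sgn_mul_sub_eq_zero {ε : Bool} {x y : ℝ} : sgn ε * (x - y) = 0 ↔ x = y := by
  cases ε <;> simp [sgn, sub_eq_zero, eq_comm]

theorem sgn_not (ε : Bool) : sgn (!ε) = -sgn ε := by
  cases ε <;> simp [sgn]

theorem quadrant_eq_inter (p : ℝ × ℝ) (ε₁ ε₂ : Bool) :
    quadrant p ε₁ ε₂ = {q | 0 ≤ sgn ε₁ * (q.1 - p.1)} ∩ {q | 0 ≤ sgn ε₂ * (q.2 - p.2)} :=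
  rfl

theorem isClosed_quadrant (p : ℝ × ℝ) (ε₁ ε₂ : Bool) : IsClosed (quadrant p ε₁ ε₂) :=
  quadrant_eq_inter p ε₁ ε₂ ▸
    (isClosed_le continuous_const (by fun_prop)).inter (isClosed_le continuous_const (by fun_prop))

theorem frontier_quadrant_subset (p : ℝ × ℝ) (ε₁ ε₂ : Bool) :
    frontier (quadrant p ε₁ ε₂) ⊆ {q | q.1 = p.1 ∨ q.2 = p.2} := by
  intro q hq
  rw [quadrant_eq_inter] at hq
  rcases frontier_inter_subset _ _ hq with ⟨h, -⟩ | ⟨-, h⟩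
  · exact .inl (sgn_mul_sub_eq_zero.mp
      (frontier_le_subset_eq continuous_const (by fun_prop) h).symm)
  · exact .inr (sgn_mul_sub_eq_zero.mp
      (frontier_le_subset_eq continuous_const (by fun_prop) h).symm)

theorem eq_of_mem_quadrant_of_mem_quadrant_not {p q : ℝ × ℝ} {ε₁ ε₂ : Bool}
    (hq : q ∈ quadrant p ε₁ ε₂) (hq' : q ∈ quadrant p (!ε₁) (!ε₂)) : q = p := by
  obtain ⟨h₁, h₂⟩ := hq
  obtain ⟨h₁', h₂'⟩ := hq'
  rw [sgn_not, neg_mul, neg_nonneg] at h₁' h₂'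
  exact Prod.ext (sgn_mul_sub_eq_zero.mp (le_antisymm h₁' h₁))
    (sgn_mul_sub_eq_zero.mp (le_antisymm h₂' h₂))

theorem subset_hatchX (A : Set (ℝ × ℝ)) : A ⊆ hatchX A :=
  fun a ha => ⟨a, ha, a, ha, rfl, rfl, le_rfl, le_rfl⟩

theorem subset_hatchY (A : Set (ℝ × ℝ)) : A ⊆ hatchY A :=
  fun a ha => ⟨a, ha, a, ha, rfl, rfl, le_rfl, le_rfl⟩

theorem hatchX_mono {A B : Set (ℝ × ℝ)} (h : A ⊆ B) : hatchX A ⊆ hatchX B :=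
  fun _ ⟨a, ha, b, hb, hab⟩ => ⟨a, h ha, b, h hb, hab⟩

theorem hatchX_subset_of_doubleHatch_eq {A : Set (ℝ × ℝ)} (hL : doubleHatch A = A) :
    hatchX A ⊆ A :=
  (hatchX_mono (subset_hatchY A)).trans hL.subset

theorem hatchY_subset_of_doubleHatch_eq {A : Set (ℝ × ℝ)} (hL : doubleHatch A = A) :
    hatchY A ⊆ A :=
  (subset_hatchX (hatchY A)).trans hL.subset

theorem exists_sgn_of_notMem_hatchX {A : Set (ℝ × ℝ)} {p : ℝ × ℝ} (hp : p ∉ hatchX A) :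
    ∃ ε, ∀ q ∈ A, q.2 = p.2 → sgn ε * (q.1 - p.1) < 0 := by
  by_contra! h
  obtain ⟨a, ha, ha₂, ha₁⟩ := h false
  obtain ⟨b, hb, hb₂, hb₁⟩ := h true
  simp only [sgn, Bool.false_eq_true, if_false, if_true] at ha₁ hb₁
  exact hp ⟨a, ha, b, hb, ha₂, hb₂, by linarith, by linarith⟩

theorem exists_sgn_of_notMem_hatchY {A : Set (ℝ × ℝ)} {p : ℝ × ℝ} (hp : p ∉ hatchY A) :
    ∃ ε, ∀ q ∈ A, q.1 = p.1 → sgn ε * (q.2 - p.2) < 0 := by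
  by_contra! h
  obtain ⟨a, ha, ha₁, ha₂⟩ := h false
  obtain ⟨b, hb, hb₁, hb₂⟩ := h true
  simp only [sgn, Bool.false_eq_true, if_false, if_true] at ha₂ hb₂
  exact hp ⟨a, ha, b, hb, ha₁, hb₁, by linarith, by linarith⟩

/-- If `A` is L-invariant (i.e. path connected with `L(A) = A`) and every one of the
four quadrants of `p` meets `A`, then `p ∈ A`. -/
theorem mem_of_quadrants_of_LInvariant (A : Set (ℝ × ℝ)) (hA : IsPathConnected A)
    (hL : doubleHatch A = A) (p : ℝ × ℝ)
    (h : ∀ ε₁ ε₂ : Bool, (A ∩ quadrant p ε₁ ε₂).Nonempty) :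
    p ∈ A := by
  by_contra hp
  obtain ⟨ε₁, hH⟩ :=
    exists_sgn_of_notMem_hatchX (notMem_subset (hatchX_subset_of_doubleHatch_eq hL) hp)
  obtain ⟨ε₂, hV⟩ :=
    exists_sgn_of_notMem_hatchY (notMem_subset (hatchY_subset_of_doubleHatch_eq hL) hp)
  obtain ⟨b, hbA, hb⟩ := h (!ε₁) (!ε₂)
  have hb_out : b ∉ quadrant p ε₁ ε₂ := fun hb' =>
    hp (eq_of_mem_quadrant_of_mem_quadrant_not hb' hb ▸ hbA)
  obtain ⟨q, hqA, hq⟩ :=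
    hA.isConnected.isPreconnected.inter_frontier_nonempty (h ε₁ ε₂) ⟨b, hbA, hb_out⟩
  have hqQ := (isClosed_quadrant p ε₁ ε₂).frontier_subset hq
  rcases frontier_quadrant_subset p ε₁ ε₂ hq with h₁ | h₂
  · exact (hV q hqA h₁).not_ge hqQ.2
  · exact (hH q hqA h₂).not_ge hqQ.1
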